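/- Let λ > 0, a > 2, ρ > 3/(4(a−1)), and let p_λ be the SCAD penalty with coordinatewise sum P_λ(x) = Σ_{j=1}^p p_λ(|x_j|). Let ψ*, ψ̂ ∈ ℝ^p, set ν = ψ̂ − ψ*, and let S ⊆ {1,…,p} with |S| = s. Suppose that (i) (ρ − 1/(2(a−1)))‖ν‖₂² ≤ P_λ(ψ*) − P_λ(ψ̂) + (λ/2)‖ν‖₁, and (ii) 3P_λ(ψ*) − P_λ(ψ̂) ≤ 3λ‖ν_S‖₁ − λ‖ν_{S^c}‖₁, where ν_S (resp. ν_{S^c}) equals ν on S (resp. on the complement of S) and is zero elsewhere. Then ‖ν‖₂ ≤ 6λ√s / (4ρ − 3/(a−1)). -/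

import Mathlib

/-!
Write `ν = ψ̂ - ψ*`. Since `p_λ` is nondecreasing and subadditive on `[0, ∞)`, `P_λ(ν) ≤ P_λ(ψ̂) + P_λ(ψ*)`,
and together with `λ|t| ≤ p_λ(|t|) + t² / (2(a-1))` this gives
`λ‖ν‖₁ ≤ P_λ(ψ̂) + P_λ(ψ*) + ‖ν‖₂² / (2(a-1))`. Adding four times (i), twice (ii) and twice this
bound, the penalties and `‖ν‖₁` cancel and `(4ρ - 3/(a-1)) ‖ν‖₂² ≤ 6λ‖ν_S‖₁ ≤ 6λ√s ‖ν‖₂`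
remains, the last step by Cauchy–Schwarz on `S`.
-/

/-- The SCAD penalty with regularization parameter `lam` and non-convexity parameter `a`. -/
noncomputable def scad (lam a t : ℝ) : ℝ :=
  if t ≤ lam then lam * t
  else if t ≤ a * lam then -(t ^ 2 - 2 * a * lam * t + lam ^ 2) / (2 * (a - 1))
  else (a + 1) * lam ^ 2 / 2

/-- Coordinatewise SCAD penalty `P_λ(x) = Σ_j p_λ(|x_j|)`. -/
noncomputable def scadSum (lam a : ℝ) {p : ℕ} (x : Fin p → ℝ) : ℝ :=
  ∑ j, scad lam a |x j|

open Finset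

section
variable {lam a : ℝ}

lemma two_mul_sub_one_mul_scad (ha : 1 < a) (t : ℝ) :
    2 * (a - 1) * scad lam a t =
      if t ≤ lam then 2 * (a - 1) * lam * t
      else if t ≤ a * lam then -(t ^ 2 - 2 * a * lam * t + lam ^ 2)
      else (a + 1) * (a - 1) * lam ^ 2 := by
  unfold scad
  split_ifs
  · ring
  · exact mul_div_cancel₀ _ (by linarith)
  · ring

lemma scad_monotone (hlam : 0 ≤ lam) (ha : 1 < a) : Monotone (scad lam a) := by
  intro u v huv
  have hk : 0 ≤ (a - 1) * lam := mul_nonneg (by linarith) hlam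
  refine le_of_mul_le_mul_left ?_ (by linarith : 0 < 2 * (a - 1))
  rw [two_mul_sub_one_mul_scad ha, two_mul_sub_one_mul_scad ha]
  split_ifs <;> nlinarith

lemma scad_add_le (hlam : 0 ≤ lam) (ha : 1 < a) {u v : ℝ} (hu : 0 ≤ u) (hv : 0 ≤ v) :
    scad lam a (u + v) ≤ scad lam a u + scad lam a v := by
  have hk : 0 ≤ (a - 1) * lam := mul_nonneg (by linarith) hlam
  have hk' : 0 ≤ (a + 1) * (a - 1) * lam ^ 2 := by positivity
  refine le_of_mul_le_mul_left ?_ (by linarith : 0 < 2 * (a - 1))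
  rw [mul_add, two_mul_sub_one_mul_scad ha, two_mul_sub_one_mul_scad ha,
    two_mul_sub_one_mul_scad ha]
  split_ifs <;> nlinarith

lemma scad_abs_sub_le (hlam : 0 ≤ lam) (ha : 1 < a) (x y : ℝ) :
    scad lam a |x - y| ≤ scad lam a |x| + scad lam a |y| :=
  (scad_monotone hlam ha (abs_sub x y)).trans
    (scad_add_le hlam ha (abs_nonneg _) (abs_nonneg _))

lemma lam_mul_le_scad_add_sq (hlam : 0 ≤ lam) (ha : 1 < a) (t : ℝ) :
    lam * t ≤ scad lam a t + t ^ 2 / (2 * (a - 1)) := by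
  have hk : 0 < 2 * (a - 1) := by linarith
  refine le_of_mul_le_mul_left ?_ hk
  rw [mul_add, mul_div_cancel₀ _ hk.ne', two_mul_sub_one_mul_scad ha]
  split_ifs <;> nlinarith

lemma lam_mul_sum_abs_sub_le (hlam : 0 ≤ lam) (ha : 1 < a) {p : ℕ} (x y : Fin p → ℝ) :
    lam * ∑ j, |x j - y j| ≤
      scadSum lam a x + scadSum lam a y + (∑ j, (x j - y j) ^ 2) / (2 * (a - 1)) := by
  rw [scadSum, scadSum, mul_sum, sum_div, ← sum_add_distrib, ← sum_add_distrib]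
  gcongr with j
  calc lam * |x j - y j| ≤ scad lam a |x j - y j| + |x j - y j| ^ 2 / (2 * (a - 1)) :=
        lam_mul_le_scad_add_sq hlam ha _
    _ ≤ _ := by rw [sq_abs]; gcongr; exact scad_abs_sub_le hlam ha _ _

end

section
variable {ι : Type*} [Fintype ι] [DecidableEq ι] (S : Finset ι) (f : ι → ℝ)

lemma sum_abs_ite_mem_le_sqrt_card_mul_sqrt :
    ∑ j, |if j ∈ S then f j else 0| ≤ √(#S) * √(∑ j, f j ^ 2) := by
  simp only [apply_ite abs, abs_zero, sum_ite_mem, univ_inter]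
  rw [← Real.sqrt_mul (by positivity)]
  refine Real.le_sqrt_of_sq_le ?_
  calc (∑ j ∈ S, |f j|) ^ 2 ≤ (#S : ℝ) * ∑ j ∈ S, |f j| ^ 2 := sq_sum_le_card_mul_sum_sq
    _ ≤ #S * ∑ j, f j ^ 2 := by
      simp only [sq_abs]
      gcongr
      exact subset_univ S

end

lemma sqrt_le_div_of_mul_le {c b T : ℝ} (hc : 0 < c) (hb : 0 ≤ b) (hT : 0 ≤ T)
    (h : c * T ≤ b * √T) : √T ≤ b / c := by
  rw [le_div_iff₀ hc]
  rcases (Real.sqrt_nonneg T).eq_or_lt with h0 | hpos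
  · rw [← h0]; simpa using hb
  · refine le_of_mul_le_mul_right ?_ hpos
    calc √T * c * √T = c * T := by rw [mul_right_comm, Real.mul_self_sqrt hT, mul_comm]
      _ ≤ b * √T := h

/-- Deterministic concluding step of the main rate theorem: under the RSC-type
  inequality (i) and the support decomposition inequality (ii), any stationary
  point satisfies `‖ν‖₂ ≤ 6λ√s / (4ρ − 3/(a−1))`. -/
theorem scad_rate_conclusion (lam a ρ : ℝ) (hlam : 0 < lam) (ha : 2 < a)
    (hρ : 3 / (4 * (a - 1)) < ρ)
    (p : ℕ) (ψstar ψhat : Fin p → ℝ) (S : Finset (Fin p)) (s : ℕ) (hs : S.card = s)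
    (hi : (ρ - 1 / (2 * (a - 1))) * (∑ j, (ψhat j - ψstar j) ^ 2) ≤
      scadSum lam a ψstar - scadSum lam a ψhat +
        lam / 2 * ∑ j, |ψhat j - ψstar j|)
    (hii : 3 * scadSum lam a ψstar - scadSum lam a ψhat ≤
      3 * lam * (∑ j, |if j ∈ S then ψhat j - ψstar j else 0|) -
        lam * (∑ j, |if j ∈ S then 0 else ψhat j - ψstar j|)) :
    Real.sqrt (∑ j, (ψhat j - ψstar j) ^ 2) ≤
      6 * lam * Real.sqrt s / (4 * ρ - 3 / (a - 1)) := by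
  have ha1 : 1 < a := by linarith
  have hc : 0 < 4 * ρ - 3 / (a - 1) := by
    rw [div_mul_eq_div_div_swap, div_lt_iff₀ four_pos] at hρ
    linarith
  set ν := fun j => ψhat j - ψstar j
  have hl1 := lam_mul_sum_abs_sub_le hlam.le ha1 ψhat ψstar
  have hSc : 0 ≤ lam * ∑ j, |if j ∈ S then 0 else ν j| := by positivity
  have hcone : (4 * ρ - 3 / (a - 1)) * ∑ j, ν j ^ 2 ≤
      6 * lam * ∑ j, |if j ∈ S then ν j else 0| := by
    have hinv : (2 * (a - 1))⁻¹ = (a - 1)⁻¹ / 2 := by rw [mul_inv]; ring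
    linear_combination 4 * hi + 2 * hii + 2 * hl1 + 2 * hSc + 6 * (∑ j, ν j ^ 2) * hinv
  subst hs
  refine sqrt_le_div_of_mul_le hc (by positivity) (by positivity) (hcone.trans ?_)
  calc 6 * lam * ∑ j, |if j ∈ S then ν j else 0| ≤ 6 * lam * (√(#S) * √(∑ j, ν j ^ 2)) := by
        gcongr; exact sum_abs_ite_mem_le_sqrt_card_mul_sqrt S ν
    _ = _ := by ring
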